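/- arXiv:1709.00142 — 2 statements merged into one kernel-verified Lean document; each statement's English description precedes it below -/
import Mathlib

section
/- Let α be an element of the Jones monoid J_n with rank(α) = q, transversals {a_i, b_i'} for 1 ≤ i ≤ q where a_1 < ⋯ < a_q. Then b_1 < ⋯ < b_q, and a_i ≡ b_i ≡ i (mod 2) for all i. -/
namespace PM

/-- The points `{1,…,n} ∪ {1',…,n'}`: `Sum.inl` is the top row, `Sum.inr` the bottom row. -/
abbrev Pt (n : ℕ) := Fin n ⊕ Fin n

/-- An element of the partition monoid `P_n`: a set partition of `Pt n`,
encoded as an equivalence relation (setoid). -/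
abbrev Ptn (n : ℕ) := Setoid (Pt n)

/-- Embedding of the first factor (as top and middle layer) into the three-layer set. -/
def iota1 {n : ℕ} : Pt n → (Fin n ⊕ Pt n)
  | Sum.inl i => Sum.inl i
  | Sum.inr i => Sum.inr (Sum.inl i)

/-- Embedding of the second factor (as middle and bottom layer). -/
def iota2 {n : ℕ} : Pt n → (Fin n ⊕ Pt n)
  | Sum.inl i => Sum.inr (Sum.inl i)
  | Sum.inr i => Sum.inr (Sum.inr i)

/-- Embedding of the product (top and bottom layer). -/
def iota3 {n : ℕ} : Pt n → (Fin n ⊕ Pt n)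
  | Sum.inl i => Sum.inl i
  | Sum.inr i => Sum.inr (Sum.inr i)

/-- The edges of the product graph Π(α,β) on the three-layer vertex set. -/
def mulBase {n : ℕ} (α β : Ptn n) (a b : Fin n ⊕ Pt n) : Prop :=
  (∃ x y : Pt n, α.r x y ∧ iota1 x = a ∧ iota1 y = b) ∨
    (∃ x y : Pt n, β.r x y ∧ iota2 x = a ∧ iota2 y = b)

/-- The product in the partition monoid: `x, y` lie in the same block of `α * β`
iff they are connected by a path in the product graph. -/
def pmul {n : ℕ} (α β : Ptn n) : Ptn n :=
  Setoid.comap iota3 (Relation.EqvGen.setoid (mulBase α β))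

/-- The identity partition, with blocks `{i, i'}`. -/
def pone (n : ℕ) : Ptn n := Setoid.ker (Sum.elim id id)

/-- The domain: top points lying in a transversal block. -/
def dom {n : ℕ} (α : Ptn n) : Set (Fin n) := {i | ∃ j, α.r (Sum.inl i) (Sum.inr j)}

/-- The codomain: bottom points lying in a transversal block. -/
def codom {n : ℕ} (α : Ptn n) : Set (Fin n) := {j | ∃ i, α.r (Sum.inl i) (Sum.inr j)}

/-- The kernel: the induced equivalence on the top row. -/
def kerr {n : ℕ} (α : Ptn n) (i j : Fin n) : Prop := α.r (Sum.inl i) (Sum.inl j)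

/-- The cokernel: the induced equivalence on the bottom row. -/
def cokerr {n : ℕ} (α : Ptn n) (i j : Fin n) : Prop := α.r (Sum.inr i) (Sum.inr j)

/-- The rank: the number of transversal blocks, counted via the minimal
top point of each transversal block. -/
noncomputable def rank {n : ℕ} (α : Ptn n) : ℕ :=
  Set.ncard {i : Fin n | i ∈ dom α ∧ ∀ j ∈ dom α, kerr α i j → i ≤ j}

/-- Green's R relation on `P_n` (a monoid, so no extra identity is needed). -/
def PGreenR {n : ℕ} (α β : Ptn n) : Prop :=
  (∃ γ, pmul α γ = β) ∧ ∃ γ, pmul β γ = α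

/-- Green's L relation on `P_n`. -/
def PGreenL {n : ℕ} (α β : Ptn n) : Prop :=
  (∃ γ, pmul γ α = β) ∧ ∃ γ, pmul γ β = α

/-- Green's J relation on `P_n`. -/
def PGreenJ {n : ℕ} (α β : Ptn n) : Prop :=
  (∃ γ δ, pmul (pmul γ α) δ = β) ∧ ∃ γ δ, pmul (pmul γ β) δ = α

/-- The involution `α ↦ α*`, reflecting in the horizontal axis. -/
def star {n : ℕ} (α : Ptn n) : Ptn n := Setoid.comap Sum.swap α

/-- `α̂` : the unique partition of rank 0 with the same kernel and cokernel as `α`: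
it relates two points iff they lie on the same row and are `α`-related. -/
def hat {n : ℕ} (α : Ptn n) : Ptn n where
  r x y := α.r x y ∧ x.isLeft = y.isLeft
  iseqv :=
    ⟨fun x => ⟨α.iseqv.refl x, rfl⟩,
     fun h => ⟨α.iseqv.symm h.1, h.2.symm⟩,
     fun h h' => ⟨α.iseqv.trans h.1 h'.1, h.2.trans h'.2⟩⟩

/-- `α` is a Brauer element: every block has size exactly 2. -/
def IsBrauer {n : ℕ} (α : Ptn n) : Prop :=
  ∀ x : Pt n, ∃ y, y ≠ x ∧ α.r x y ∧ ∀ z, α.r x z → z = x ∨ z = y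

/-- Position of a point in the boundary order `1, …, n, n', …, 1'`. -/
def ordPos {n : ℕ} : Pt n → ℕ
  | Sum.inl i => i.val
  | Sum.inr j => 2 * n - 1 - j.val

/-- `α` is planar: no two of its blocks cross with respect to the boundary order. -/
def IsPlanar {n : ℕ} (α : Ptn n) : Prop :=
  ∀ w x y z : Pt n, ordPos w < ordPos x → ordPos x < ordPos y → ordPos y < ordPos z →
    α.r w y → α.r x z → α.r w x

end PM

namespace PM

variable {n : ℕ} {α : Ptn n}

/-- Fixed-point-free involution-closed finsets have even cardinality. -/
lemma even_card_of_invol {β : Type*} [DecidableEq β] (f : β → β) (hf : ∀ x, f (f x) = x)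
    (hne : ∀ x, f x ≠ x) : ∀ S : Finset β, (∀ x ∈ S, f x ∈ S) → Even S.card := by
  intro S
  induction S using Finset.strongInduction with
  | _ S ih =>
    intro hS
    rcases S.eq_empty_or_nonempty with rfl | ⟨x, hx⟩
    · simp
    · have hfx : f x ∈ S := hS x hx
      have hxfx : f x ≠ x := hne x
      set T := (S.erase x).erase (f x) with hT
      have hTsub : T ⊂ S := by
        refine Finset.ssubset_of_subset_of_ssubset ?_ (Finset.erase_ssubset hx)
        exact Finset.erase_subset _ _
      have hTcl : ∀ y ∈ T, f y ∈ T := by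
        intro y hy
        have hyS : y ∈ S := Finset.mem_of_mem_erase (Finset.mem_of_mem_erase hy)
        have hy1 : y ≠ f x := Finset.ne_of_mem_erase hy
        have hy2 : y ≠ x := Finset.ne_of_mem_erase (Finset.mem_of_mem_erase hy)
        refine Finset.mem_erase.2 ⟨?_, Finset.mem_erase.2 ⟨?_, hS y hyS⟩⟩
        · intro h; apply hy2; have h2 := congrArg f h; rwa [hf, hf] at h2
        · intro h; apply hy1; rw [← hf y, h]
      have hcard : S.card = T.card + 2 := by
        rw [hT, Finset.card_erase_of_mem (Finset.mem_erase.2 ⟨hxfx, hfx⟩),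
          Finset.card_erase_of_mem hx]
        have h2 : 2 ≤ S.card := Finset.one_lt_card.2 ⟨x, hx, f x, hfx, fun h => hxfx h.symm⟩
        omega
      rcases ih T hTsub hTcl with ⟨m, hm⟩
      exact ⟨m + 1, by omega⟩

/-- The unique partner of a point in a Brauer partition. -/
noncomputable def partner (hB : IsBrauer α) (x : Pt n) : Pt n := (hB x).choose

lemma partner_ne (hB : IsBrauer α) (x : Pt n) : partner hB x ≠ x := (hB x).choose_spec.1

lemma partner_rel (hB : IsBrauer α) (x : Pt n) : α.r x (partner hB x) := (hB x).choose_spec.2.1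

lemma rel_eq_or (hB : IsBrauer α) {x z : Pt n} (h : α.r x z) : z = x ∨ z = partner hB x :=
  (hB x).choose_spec.2.2 z h

lemma eq_partner (hB : IsBrauer α) {x y : Pt n} (h : α.r x y) (hne : y ≠ x) :
    partner hB x = y := ((rel_eq_or hB h).resolve_left hne).symm

lemma partner_invol (hB : IsBrauer α) (x : Pt n) : partner hB (partner hB x) = x :=
  eq_partner hB (α.iseqv.symm (partner_rel hB x)) (fun h => partner_ne hB x h.symm)

lemma ordPos_inl (i : Fin n) : ordPos (Sum.inl i : Pt n) = i.val := rfl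

lemma ordPos_inr (j : Fin n) : ordPos (Sum.inr j : Pt n) = 2 * n - 1 - j.val := rfl

lemma ordPos_inl_lt_inr (i j : Fin n) : ordPos (Sum.inl i : Pt n) < ordPos (Sum.inr j : Pt n) := by
  have hi := i.isLt; have hj := j.isLt
  simp only [ordPos]; omega

lemma ordPos_inr_lt_inr {i j : Fin n} (h : j < i) :
    ordPos (Sum.inr i : Pt n) < ordPos (Sum.inr j : Pt n) := by
  have hi := i.isLt; have hj := j.isLt
  simp only [ordPos]; omega

/-- No crossing in a planar Brauer element. -/
lemma nocross (hB : IsBrauer α) (hP : IsPlanar α) {w x y z : Pt n}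
    (h1 : ordPos w < ordPos x) (h2 : ordPos x < ordPos y) (h3 : ordPos y < ordPos z)
    (hwy : α.r w y) (hxz : α.r x z) : False := by
  have hwx := hP w x y z h1 h2 h3 hwy hxz
  have hyw : y ≠ w := fun h => by subst h; omega
  have hpy : partner hB w = y := eq_partner hB hwy hyw
  rcases rel_eq_or hB hwx with h | h
  · subst h; omega
  · rw [hpy] at h; subst h; omega

end PM

section Aux

open PM Finset

variable {n q : ℕ} {α : PM.Ptn n} {a b : Fin q → Fin n}

/-- If `S` is a set of top points closed under `α`-partnership, its cardinality is even. -/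
lemma even_of_closed_top (hB : IsBrauer α) (S : Finset (Fin n))
    (hcl : ∀ x ∈ S, ∃ y ∈ S, partner hB (Sum.inl x) = Sum.inl y) : Even S.card := by
  classical
  have := even_card_of_invol (partner hB) (partner_invol hB) (partner_ne hB)
    (S.map ⟨Sum.inl, Sum.inl_injective⟩) ?_
  · rwa [Finset.card_map] at this
  · intro x hx
    simp only [Finset.mem_map, Function.Embedding.coeFn_mk] at hx ⊢
    obtain ⟨u, hu, rfl⟩ := hx
    obtain ⟨y, hy, hpy⟩ := hcl u hu
    exact ⟨y, hy, hpy.symm⟩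

/-- If `S` is a set of bottom points closed under `α`-partnership, its cardinality is even. -/
lemma even_of_closed_bot (hB : IsBrauer α) (S : Finset (Fin n))
    (hcl : ∀ x ∈ S, ∃ y ∈ S, partner hB (Sum.inr x) = Sum.inr y) : Even S.card := by
  classical
  have := even_card_of_invol (partner hB) (partner_invol hB) (partner_ne hB)
    (S.map ⟨Sum.inr, Sum.inr_injective⟩) ?_
  · rwa [Finset.card_map] at this
  · intro x hx
    simp only [Finset.mem_map, Function.Embedding.coeFn_mk] at hx ⊢
    obtain ⟨u, hu, rfl⟩ := hx
    obtain ⟨y, hy, hpy⟩ := hcl u hu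
    exact ⟨y, hy, hpy.symm⟩

end Aux

/-- Let `α` be an element of the Jones monoid `J_n` (a planar Brauer
element) of rank `q`, with transversals `{a_i, b_i'}` (for `i < q`) listed so that
`a_0 < ⋯ < a_{q-1}`.  Then `b_0 < ⋯ < b_{q-1}`, and (in the 1-indexed convention of the
paper, i.e. after the shift by one implicit in 0-indexing) `a_i ≡ b_i ≡ i (mod 2)` for
all `i`. -/
theorem stmt17 (n q : ℕ) (α : PM.Ptn n) (hB : PM.IsBrauer α) (hP : PM.IsPlanar α)
    (hq : PM.rank α = q) (a b : Fin q → Fin n) (ha : StrictMono a)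
    (hab : ∀ i : Fin q, α.r (Sum.inl (a i)) (Sum.inr (b i)))
    (hdom : ∀ x : Fin n, (∃ j, α.r (Sum.inl x) (Sum.inr j)) ↔ ∃ i, a i = x) :
    StrictMono b ∧ ∀ i : Fin q, (a i).val % 2 = i.val % 2 ∧ (b i).val % 2 = i.val % 2 := by
  classical
  open PM in
  -- partner values at transversals
  have hpa : ∀ i : Fin q, partner hB (Sum.inl (a i)) = Sum.inr (b i) := fun i =>
    eq_partner hB (hab i) (by simp)
  have hpb : ∀ i : Fin q, partner hB (Sum.inr (b i)) = Sum.inl (a i) := fun i =>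
    eq_partner hB (α.iseqv.symm (hab i)) (by simp)
  -- b is injective / strictly monotone
  have hbinj : Function.Injective b := by
    intro i j hij
    have : (Sum.inl (a i) : Pt n) = Sum.inl (a j) := by
      rw [← hpb i, hij, hpb j]
    exact ha.injective (Sum.inl_injective this)
  have hbmono : StrictMono b := by
    intro i j hij
    rcases lt_trichotomy (b i) (b j) with h | h | h
    · exact h
    · exact absurd (hbinj h) (ne_of_lt hij)
    · exact absurd (nocross hB hP (x := Sum.inl (a j)) (y := Sum.inr (b i))
        (by simpa [ordPos_inl] using (Fin.lt_iff_val_lt_val.1 (ha hij)))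
        (ordPos_inl_lt_inr _ _) (ordPos_inr_lt_inr h) (hab i) (hab j)) (fun h => h)
  refine ⟨hbmono, ?_⟩
  -- characterization of codom
  have hcodom : ∀ x : Fin n, (∃ j, α.r (Sum.inl j) (Sum.inr x)) ↔ ∃ i, b i = x := by
    intro x
    constructor
    · rintro ⟨j, hj⟩
      obtain ⟨i, rfl⟩ := (hdom j).1 ⟨x, hj⟩
      have : (Sum.inr x : Pt n) = Sum.inr (b i) := by
        rw [← hpa i]; exact (eq_partner hB hj (by simp)).symm
      exact ⟨i, (Sum.inr_injective this).symm⟩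
    · rintro ⟨i, rfl⟩; exact ⟨a i, hab i⟩
  -- evenness of the initial top segment
  have evenA0 : ∀ h0 : 0 < q, Even (a ⟨0, h0⟩).val := by
    intro h0
    have := even_of_closed_top (α := α) hB (Finset.Iio (a ⟨0, h0⟩)) ?_
    · rwa [Fin.card_Iio] at this
    · intro x hx
      rw [Finset.mem_Iio] at hx
      -- x is not in dom
      have hxnd : ¬ ∃ j, α.r (Sum.inl x) (Sum.inr j) := by
        rw [hdom]
        rintro ⟨i, rfl⟩
        exact absurd (ha.monotone (Fin.mk_le_of_le_val (Nat.zero_le _))) (not_le.2 hx)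
      -- partner is a top point
      obtain (⟨y, hy⟩ | ⟨y, hy⟩) : (∃ y, partner hB (Sum.inl x) = Sum.inl y) ∨
          (∃ y, partner hB (Sum.inl x) = Sum.inr y) := by
        rcases h : partner hB (Sum.inl x) with y | y
        · exact Or.inl ⟨y, rfl⟩
        · exact Or.inr ⟨y, rfl⟩
      swap
      · exact absurd ⟨y, by rw [← hy]; exact partner_rel hB _⟩ hxnd
      refine ⟨y, ?_, hy⟩
      rw [Finset.mem_Iio]
      have hxy : α.r (Sum.inl x) (Sum.inl y) := by rw [← hy]; exact partner_rel hB _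
      rcases lt_trichotomy y (a ⟨0, h0⟩) with h | h | h
      · exact h
      · exfalso
        have : (Sum.inl x : Pt n) = Sum.inr (b ⟨0, h0⟩) := by
          rw [← hpa ⟨0, h0⟩, ← h, ← hy, partner_invol]
        exact absurd this (by simp)
      · exact absurd (nocross hB hP (w := Sum.inl x) (x := Sum.inl (a ⟨0, h0⟩))
          (y := Sum.inl y) (z := Sum.inr (b ⟨0, h0⟩))
          (by simpa [ordPos_inl] using hx) (by simpa [ordPos_inl] using h)
          (ordPos_inl_lt_inr _ _) hxy (hab _)) (fun h => h)
  -- evenness of the initial bottom segment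
  have evenB0 : ∀ h0 : 0 < q, Even (b ⟨0, h0⟩).val := by
    intro h0
    have := even_of_closed_bot (α := α) hB (Finset.Iio (b ⟨0, h0⟩)) ?_
    · rwa [Fin.card_Iio] at this
    · intro x hx
      rw [Finset.mem_Iio] at hx
      have hxnc : ¬ ∃ j, α.r (Sum.inl j) (Sum.inr x) := by
        rw [hcodom]
        rintro ⟨i, rfl⟩
        exact absurd (hbmono.monotone (Fin.mk_le_of_le_val (Nat.zero_le _))) (not_le.2 hx)
      obtain (⟨y, hy⟩ | ⟨y, hy⟩) : (∃ y, partner hB (Sum.inr x) = Sum.inl y) ∨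
          (∃ y, partner hB (Sum.inr x) = Sum.inr y) := by
        rcases h : partner hB (Sum.inr x) with y | y
        · exact Or.inl ⟨y, rfl⟩
        · exact Or.inr ⟨y, rfl⟩
      · exact absurd ⟨y, α.iseqv.symm (by rw [← hy]; exact partner_rel hB _)⟩ hxnc
      refine ⟨y, ?_, hy⟩
      rw [Finset.mem_Iio]
      have hxy : α.r (Sum.inr x) (Sum.inr y) := by rw [← hy]; exact partner_rel hB _
      rcases lt_trichotomy y (b ⟨0, h0⟩) with h | h | h
      · exact h
      · exfalso
        have : (Sum.inr x : Pt n) = Sum.inl (a ⟨0, h0⟩) := by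
          rw [← hpb ⟨0, h0⟩, ← h, ← hy, partner_invol]
        exact absurd this (by simp)
      · exact absurd (nocross hB hP (w := Sum.inl (a ⟨0, h0⟩)) (x := Sum.inr y)
          (y := Sum.inr (b ⟨0, h0⟩)) (z := Sum.inr x)
          (ordPos_inl_lt_inr _ _) (ordPos_inr_lt_inr h) (ordPos_inr_lt_inr hx)
          (hab _) (α.iseqv.symm hxy)) (fun h => h)
  -- evenness of top gaps
  have evenAgap : ∀ (i : ℕ) (hi : i + 1 < q),
      Even ((a ⟨i + 1, hi⟩).val - (a ⟨i, Nat.lt_of_succ_lt hi⟩).val - 1) := by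
    intro i hi
    set i0 : Fin q := ⟨i, Nat.lt_of_succ_lt hi⟩
    set i1 : Fin q := ⟨i + 1, hi⟩
    have := even_of_closed_top (α := α) hB (Finset.Ioo (a i0) (a i1)) ?_
    · rwa [Fin.card_Ioo] at this
    · intro x hx
      rw [Finset.mem_Ioo] at hx
      obtain ⟨hx1, hx2⟩ := hx
      have hxnd : ¬ ∃ j, α.r (Sum.inl x) (Sum.inr j) := by
        rw [hdom]
        rintro ⟨j, rfl⟩
        rcases lt_trichotomy j i0 with h | h | h
        · exact absurd (ha h) (not_lt.2 (le_of_lt hx1))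
        · subst h; exact lt_irrefl _ hx1
        · have : i1 ≤ j := by
            rw [Fin.le_iff_val_le_val]
            exact Nat.succ_le_of_lt (Fin.lt_iff_val_lt_val.1 h)
          exact absurd (ha.monotone this) (not_le.2 hx2)
      obtain (⟨y, hy⟩ | ⟨y, hy⟩) : (∃ y, partner hB (Sum.inl x) = Sum.inl y) ∨
          (∃ y, partner hB (Sum.inl x) = Sum.inr y) := by
        rcases h : partner hB (Sum.inl x) with y | y
        · exact Or.inl ⟨y, rfl⟩
        · exact Or.inr ⟨y, rfl⟩
      swap
      · exact absurd ⟨y, by rw [← hy]; exact partner_rel hB _⟩ hxnd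
      refine ⟨y, ?_, hy⟩
      rw [Finset.mem_Ioo]
      have hxy : α.r (Sum.inl x) (Sum.inl y) := by rw [← hy]; exact partner_rel hB _
      have hne0 : y ≠ a i0 := by
        intro h
        have : (Sum.inl x : Pt n) = Sum.inr (b i0) := by
          rw [← hpa i0, ← h, ← hy, partner_invol]
        exact absurd this (by simp)
      have hne1 : y ≠ a i1 := by
        intro h
        have : (Sum.inl x : Pt n) = Sum.inr (b i1) := by
          rw [← hpa i1, ← h, ← hy, partner_invol]
        exact absurd this (by simp)
      constructor
      · rcases lt_trichotomy (a i0) y with h | h | h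
        · exact h
        · exact absurd h.symm hne0
        · exact absurd (nocross hB hP (w := Sum.inl y) (x := Sum.inl (a i0))
            (y := Sum.inl x) (z := Sum.inr (b i0))
            (by simpa [ordPos_inl] using h) (by simpa [ordPos_inl] using hx1)
            (ordPos_inl_lt_inr _ _) (α.iseqv.symm hxy) (hab _)) (fun h => h)
      · rcases lt_trichotomy y (a i1) with h | h | h
        · exact h
        · exact absurd h hne1
        · exact absurd (nocross hB hP (w := Sum.inl x) (x := Sum.inl (a i1))
            (y := Sum.inl y) (z := Sum.inr (b i1))
            (by simpa [ordPos_inl] using hx2) (by simpa [ordPos_inl] using h)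
            (ordPos_inl_lt_inr _ _) hxy (hab _)) (fun h => h)
  -- evenness of bottom gaps
  have evenBgap : ∀ (i : ℕ) (hi : i + 1 < q),
      Even ((b ⟨i + 1, hi⟩).val - (b ⟨i, Nat.lt_of_succ_lt hi⟩).val - 1) := by
    intro i hi
    set i0 : Fin q := ⟨i, Nat.lt_of_succ_lt hi⟩
    set i1 : Fin q := ⟨i + 1, hi⟩
    have := even_of_closed_bot (α := α) hB (Finset.Ioo (b i0) (b i1)) ?_
    · rwa [Fin.card_Ioo] at this
    · intro x hx
      rw [Finset.mem_Ioo] at hx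
      obtain ⟨hx1, hx2⟩ := hx
      have hxnc : ¬ ∃ j, α.r (Sum.inl j) (Sum.inr x) := by
        rw [hcodom]
        rintro ⟨j, rfl⟩
        rcases lt_trichotomy j i0 with h | h | h
        · exact absurd (hbmono h) (not_lt.2 (le_of_lt hx1))
        · subst h; exact lt_irrefl _ hx1
        · have : i1 ≤ j := by
            rw [Fin.le_iff_val_le_val]
            exact Nat.succ_le_of_lt (Fin.lt_iff_val_lt_val.1 h)
          exact absurd (hbmono.monotone this) (not_le.2 hx2)
      obtain (⟨y, hy⟩ | ⟨y, hy⟩) : (∃ y, partner hB (Sum.inr x) = Sum.inl y) ∨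
          (∃ y, partner hB (Sum.inr x) = Sum.inr y) := by
        rcases h : partner hB (Sum.inr x) with y | y
        · exact Or.inl ⟨y, rfl⟩
        · exact Or.inr ⟨y, rfl⟩
      · exact absurd ⟨y, α.iseqv.symm (by rw [← hy]; exact partner_rel hB _)⟩ hxnc
      refine ⟨y, ?_, hy⟩
      rw [Finset.mem_Ioo]
      have hxy : α.r (Sum.inr x) (Sum.inr y) := by rw [← hy]; exact partner_rel hB _
      have hne0 : y ≠ b i0 := by
        intro h
        have : (Sum.inr x : Pt n) = Sum.inl (a i0) := by
          rw [← hpb i0, ← h, ← hy, partner_invol]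
        exact absurd this (by simp)
      have hne1 : y ≠ b i1 := by
        intro h
        have : (Sum.inr x : Pt n) = Sum.inl (a i1) := by
          rw [← hpb i1, ← h, ← hy, partner_invol]
        exact absurd this (by simp)
      constructor
      · rcases lt_trichotomy (b i0) y with h | h | h
        · exact h
        · exact absurd h.symm hne0
        · exact absurd (nocross hB hP (w := Sum.inl (a i0)) (x := Sum.inr x)
            (y := Sum.inr (b i0)) (z := Sum.inr y)
            (ordPos_inl_lt_inr _ _) (ordPos_inr_lt_inr hx1) (ordPos_inr_lt_inr h)
            (hab _) hxy) (fun h => h)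
      · rcases lt_trichotomy y (b i1) with h | h | h
        · exact h
        · exact absurd h hne1
        · exact absurd (nocross hB hP (w := Sum.inl (a i1)) (x := Sum.inr y)
            (y := Sum.inr (b i1)) (z := Sum.inr x)
            (ordPos_inl_lt_inr _ _) (ordPos_inr_lt_inr h) (ordPos_inr_lt_inr hx2)
            (hab _) (α.iseqv.symm hxy)) (fun h => h)
  -- main induction
  have main : ∀ (k : ℕ) (hk : k < q),
      (a ⟨k, hk⟩).val % 2 = k % 2 ∧ (b ⟨k, hk⟩).val % 2 = k % 2 := by
    intro k
    induction k with
    | zero =>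
      intro hk
      obtain ⟨m, hm⟩ := evenA0 hk
      obtain ⟨m', hm'⟩ := evenB0 hk
      constructor <;> omega
    | succ k ih =>
      intro hk
      have hk' : k < q := Nat.lt_of_succ_lt hk
      obtain ⟨iha, ihb⟩ := ih hk'
      obtain ⟨m, hm⟩ := evenAgap k hk
      obtain ⟨m', hm'⟩ := evenBgap k hk
      have hlt : (a ⟨k, hk'⟩).val < (a ⟨k + 1, hk⟩).val :=
        Fin.lt_iff_val_lt_val.1 (ha (by simp [Fin.lt_iff_val_lt_val]))
      have hlt' : (b ⟨k, hk'⟩).val < (b ⟨k + 1, hk⟩).val :=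
        Fin.lt_iff_val_lt_val.1 (hbmono (by simp [Fin.lt_iff_val_lt_val]))
      constructor <;> omega
  intro i
  have := main i.val i.isLt
  simpa using this
end

section
/- Let S be a semigroup with a stable minimal ideal, let C₁ = (I₁, N₁) and C₂ = (I₂, N₂) be IN-pairs on S with associated J-classes J₁, J₂. If I₁ ∪ J₁ ⊆ I₂, or if I₁ = I₂ and N₁ ⊆ N₂, then R_{C₁} ⊆ R_{C₂}, where R_C = Δ_S ∪ ν_N ∪ (I × I). -/
namespace SG

variable {S : Type*} [Semigroup S]

/-- An ideal of a semigroup: a nonempty subset closed under left and right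
multiplication by arbitrary elements. -/
def IsIdeal (I : Set S) : Prop :=
  I.Nonempty ∧ ∀ x ∈ I, ∀ a : S, a * x ∈ I ∧ x * a ∈ I

/-- The minimal ideal: an ideal contained in every ideal. -/
def IsMinIdeal (M : Set S) : Prop :=
  IsIdeal M ∧ ∀ I : Set S, IsIdeal I → M ⊆ I

/-- Every element of the set is regular. -/
def RegularSet (M : Set S) : Prop := ∀ m ∈ M, ∃ y : S, m * y * m = m

/-- `f` is a retraction of the ideal `I` onto the minimal ideal `M`:
a homomorphism `I → M` fixing `M` pointwise. -/
def IsRetraction (I M : Set S) (f : S → S) : Prop :=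
  (∀ x ∈ I, f x ∈ M) ∧ (∀ x ∈ I, ∀ y ∈ I, f (x * y) = f x * f y) ∧ ∀ x ∈ M, f x = x

/-- Green's R relation (via S¹ = `WithOne S`). -/
def GreenR (a b : S) : Prop :=
  (∃ u : WithOne S, (a : WithOne S) * u = (b : WithOne S)) ∧
    ∃ v : WithOne S, (b : WithOne S) * v = (a : WithOne S)

/-- Green's L relation. -/
def GreenL (a b : S) : Prop :=
  (∃ u : WithOne S, u * (a : WithOne S) = (b : WithOne S)) ∧
    ∃ v : WithOne S, v * (b : WithOne S) = (a : WithOne S)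

/-- Green's J relation. -/
def GreenJ (a b : S) : Prop :=
  (∃ u v : WithOne S, u * (a : WithOne S) * v = (b : WithOne S)) ∧
    ∃ u v : WithOne S, u * (b : WithOne S) * v = (a : WithOne S)

/-- Green's H relation. -/
def GreenH (a b : S) : Prop := GreenR a b ∧ GreenL a b

/-- Green's D relation, as R ∘ L. -/
def GreenD (a b : S) : Prop := ∃ c : S, GreenR a c ∧ GreenL c b

/-- A set is stable if for its elements `x`: `xa J x → xa R x` and `ax J x → ax L x`. -/
def StableSet (J : Set S) : Prop :=
  ∀ x ∈ J, ∀ a : S, (GreenJ (x * a) x → GreenR (x * a) x) ∧ (GreenJ (a * x) x → GreenL (a * x) x)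

/-- The set is a J-class. -/
def IsJClass (J : Set S) : Prop := ∃ a : S, J = {b | GreenJ a b}

/-- The set is a D-class. -/
def IsDClass (J : Set S) : Prop := ∃ a : S, J = {b | GreenD a b}

/-- A binary relation is a congruence on the semigroup. -/
def IsCongruence (r : S → S → Prop) : Prop :=
  Equivalence r ∧ ∀ a b c : S, r a b → r (c * a) (c * b) ∧ r (a * c) (b * c)

/-- `N` is a normal subgroup of the subgroup `G` of `S` with identity `e`. -/
def IsNormalIn (N G : Set S) (e : S) : Prop :=
  N ⊆ G ∧ e ∈ N ∧ (∀ x ∈ N, ∀ y ∈ N, x * y ∈ N) ∧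
    (∀ x ∈ N, ∃ y ∈ N, x * y = e ∧ y * x = e) ∧
    ∀ g ∈ G, ∀ g' ∈ G, g * g' = e → g' * g = e → ∀ x ∈ N, g * x * g' ∈ N

/-- The relation ν_N = S¹(N × N)S¹ ∩ (J × J). -/
def Nu (J N : Set S) (a b : S) : Prop :=
  a ∈ J ∧ b ∈ J ∧ ∃ x ∈ N, ∃ y ∈ N, ∃ s t : WithOne S,
    s * (x : WithOne S) * t = (a : WithOne S) ∧ s * (y : WithOne S) * t = (b : WithOne S)

/-- `J` is disjoint from `I` and is minimal among the J-classes of `S \ I`. -/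
def MinimalJClassOutside (J I : Set S) : Prop :=
  (∀ a ∈ J, a ∉ I) ∧
    ∀ b : S, b ∉ I →
      (∃ a ∈ J, ∃ u v : WithOne S, u * (a : WithOne S) * v = (b : WithOne S)) → b ∈ J

end SG

/-- Let `S` be a semigroup with a stable minimal ideal and let
`C₁ = (I₁, N₁)`, `C₂ = (I₂, N₂)` be IN-pairs with associated J-classes `J₁, J₂`.
If `I₁ ∪ J₁ ⊆ I₂`, or `I₁ = I₂` and `N₁ ⊆ N₂`, then `R_{C₁} ⊆ R_{C₂}`. -/
theorem stmt19 {S : Type*} [Semigroup S] (M I₁ I₂ J₁ J₂ N₁ N₂ : Set S) (e₁ e₂ : S)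
    (hM : SG.IsMinIdeal M) (hMs : SG.StableSet M)
    (hI₁ : SG.IsIdeal I₁) (hI₂ : SG.IsIdeal I₂)
    (hJ₁ : SG.IsJClass J₁) (hJ₁s : SG.StableSet J₁) (hJ₁r : SG.RegularSet J₁)
    (hmin₁ : SG.MinimalJClassOutside J₁ I₁)
    (he₁ : e₁ * e₁ = e₁) (he₁J : e₁ ∈ J₁)
    (hN₁ : SG.IsNormalIn N₁ {x : S | SG.GreenH x e₁} e₁)
    (hJ₂ : SG.IsJClass J₂) (hJ₂s : SG.StableSet J₂) (hJ₂r : SG.RegularSet J₂)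
    (hmin₂ : SG.MinimalJClassOutside J₂ I₂)
    (he₂ : e₂ * e₂ = e₂) (he₂J : e₂ ∈ J₂)
    (hN₂ : SG.IsNormalIn N₂ {x : S | SG.GreenH x e₂} e₂)
    (hcase : (I₁ ∪ J₁ ⊆ I₂) ∨ (I₁ = I₂ ∧ N₁ ⊆ N₂)) :
    ∀ a b : S, (a = b ∨ SG.Nu J₁ N₁ a b ∨ (a ∈ I₁ ∧ b ∈ I₁)) →
      (a = b ∨ SG.Nu J₂ N₂ a b ∨ (a ∈ I₂ ∧ b ∈ I₂)) := by
  
  intro a b hab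
  rcases hab with rfl | hnu | hI
  · exact Or.inl rfl
  · rcases hcase with hsub | ⟨hIeq, hNsub⟩
    · exact Or.inr (Or.inr ⟨hsub (Or.inr hnu.1), hsub (Or.inr hnu.2.1)⟩)
    · -- Nu J₁ N₁ a b implies Nu J₂ N₂ a b
      obtain ⟨haJ₁, hbJ₁, x, hxN, y, hyN, s, t, hsa, hsb⟩ := hnu
      -- every element of N₂ lies in J₂
      obtain ⟨c, hJ₂c⟩ := hJ₂
      have he₂c : SG.GreenJ c e₂ := by
        have := he₂J; rw [hJ₂c] at this; exact this
      have memJ₂ : ∀ z ∈ N₂, z ∈ J₂ := by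
        intro z hz
        have hH : SG.GreenH z e₂ := hN₂.1 hz
        obtain ⟨⟨⟨u1, hu1⟩, ⟨v1, hv1⟩⟩, _⟩ := hH
        obtain ⟨⟨p1, q1, hpq1⟩, ⟨p2, q2, hpq2⟩⟩ := he₂c
        rw [hJ₂c]
        refine ⟨⟨p1, q1 * v1, ?_⟩, ⟨p2, u1 * q2, ?_⟩⟩
        · rw [← hv1, ← hpq1]; simp [mul_assoc]
        · rw [← hpq2, ← hu1]; simp [mul_assoc]
      have hxJ₂ : x ∈ J₂ := memJ₂ x (hNsub hxN)
      have hyJ₂ : y ∈ J₂ := memJ₂ y (hNsub hyN)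
      have haJ₂ : a ∈ J₂ :=
        hmin₂.2 a (hIeq ▸ hmin₁.1 a haJ₁) ⟨x, hxJ₂, s, t, hsa⟩
      have hbJ₂ : b ∈ J₂ :=
        hmin₂.2 b (hIeq ▸ hmin₁.1 b hbJ₁) ⟨y, hyJ₂, s, t, hsb⟩
      exact Or.inr (Or.inl ⟨haJ₂, hbJ₂, x, hNsub hxN, y, hNsub hyN, s, t, hsa, hsb⟩)
  · rcases hcase with hsub | ⟨hIeq, _⟩
    · exact Or.inr (Or.inr ⟨hsub (Or.inl hI.1), hsub (Or.inl hI.2)⟩)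
    · exact Or.inr (Or.inr ⟨hIeq ▸ hI.1, hIeq ▸ hI.2⟩)
end
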